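/- Let k ∈ ℕ and t, x, y, ω ∈ ℂ with ω ≠ 0, x ≠ 0, max{|xω|, |xt|} < 1, and y ω q^m ≠ 1 for all integers m ≥ 0. Then the series ∑_{n=0}^∞ (t^n/(q;q)_n) · D_ω^n{ ((yω;q)_∞/(xω;q)_∞) · ω^k } (q-derivatives taken with respect to ω) converges absolutely and its sum equals ((yω;q)_∞/(xω;q)_∞) · ω^k · ∑_{j=0}^{k} (−1)^j q^{kj − C(j,2)} ((q^{−k};q)_j (xω;q)_j / ((yω;q)_j (q;q)_j)) (t/ω)^j · ₂Φ₁[y/x, 0; yω q^j; q; xt]. -/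

import Mathlib

noncomputable section

/-- The q-shifted factorial `(a;q)_n`. -/
def qPoch (q a : ℂ) (n : ℕ) : ℂ := ∏ j ∈ Finset.range n, (1 - a * q ^ j)

/-- The infinite q-shifted factorial `(a;q)_∞`. -/
def qPochInf (q a : ℂ) : ℂ := ∏' j : ℕ, (1 - a * q ^ j)

/-- The q-binomial coefficient `[n k]_q`. -/
def qBinom (q : ℂ) (n k : ℕ) : ℂ := qPoch q q n / (qPoch q q k * qPoch q q (n - k))

/-- The Cauchy polynomials `p_n(x,y)`. -/
def cauchyP (q x y : ℂ) (n : ℕ) : ℂ := ∏ j ∈ Finset.range n, (x - q ^ j * y)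

/-- The generalized q-binomial coefficient `[α k]_{-q}`. -/
def genQBinom (q α : ℂ) (k : ℕ) : ℂ :=
  qPoch q (-(q ^ (-α))) k / qPoch q (-q) k * q ^ (α * (k : ℂ) - (k.choose 2 : ℂ))

/-- The generalized q-polynomials `L̃_n^{(r,s)}(α,x,y,z,a)`. -/
def Ltil (q : ℂ) (r s : ℤ) (α x y z a : ℂ) (n : ℕ) : ℂ :=
  ∑ k ∈ Finset.range (n + 1),
    qBinom q n k * genQBinom q α k *
      q ^ (r * (k.choose 2 : ℤ) - s * ((k + 1).choose 2 : ℤ) + (k.choose 2 : ℤ)) *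
      qPoch q a k * cauchyP q x y (n - k) * z ^ k

/-- The basic hypergeometric series `₂Φ₁[a,b;c;q;z]`. -/
def Phi21 (q a b c z : ℂ) : ℂ :=
  ∑' n : ℕ, qPoch q a n * qPoch q b n / (qPoch q c n * qPoch q q n) * z ^ n

/-- The basic hypergeometric series `₄Φ₃`. -/
def Phi43 (q a₁ a₂ a₃ a₄ b₁ b₂ b₃ z : ℂ) : ℂ :=
  ∑' n : ℕ, qPoch q a₁ n * qPoch q a₂ n * qPoch q a₃ n * qPoch q a₄ n /
    (qPoch q b₁ n * qPoch q b₂ n * qPoch q b₃ n * qPoch q q n) * z ^ n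

/-- The trivariate q-polynomials `F_n(x,y,z;q)`. -/
def Ftri (q x y z : ℂ) (n : ℕ) : ℂ :=
  (-1) ^ n * q ^ (-(n.choose 2 : ℤ)) *
    ∑ k ∈ Finset.range (n + 1),
      qBinom q n k * q ^ (k.choose 2) * (-z) ^ k * cauchyP q y x (n - k)

/-- The Hahn (Al-Salam–Carlitz) polynomials `φ_n^{(σ)}(x|q)`. -/
def hahnPhi (q σ x : ℂ) (n : ℕ) : ℂ :=
  ∑ k ∈ Finset.range (n + 1), qBinom q n k * qPoch q σ k * x ^ k

/-- The q-derivative operator `D_a`. -/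
def Dq (q : ℂ) (f : ℂ → ℂ) : ℂ → ℂ := fun a => (f a - f (q * a)) / a

/-- The homogeneous q-difference operator `D_{xy}`. -/
def Dxy (q : ℂ) (f : ℂ → ℂ → ℂ) : ℂ → ℂ → ℂ :=
  fun x y => (f x (y / q) - f (q * x) y) / (x - y / q)

/-! Write the function as `ω ^ k · (yω;q)_∞ / (xω;q)_∞` and expand `D_ω^n` by the q-Leibniz rule.
The iterates of the first factor are `D^j ω^k = (-1)^j q^(kj - C(j,2)) (q^(-k);q)_j ω^(k-j)`, which
vanish for `j > k`, and those of the second are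
`D^m [(yω;q)_∞ / (xω;q)_∞] = x^m (y/x;q)_m (y q^m ω;q)_∞ / (xω;q)_∞`.
After division by `(q;q)_n` the `n`-th term of the series becomes a convolution
`∑_{j ≤ k} a_j b_j(n - j)` in which `b_j(m)` is the `m`-th term of the `₂Φ₁` series with argument
`xt`. Its coefficients converge (each q-shifted factorial tends to its infinite version, and the
denominators have non-zero limits), so `∑_m ‖b_j(m)‖ < ∞`, and the series can be summed term by term
in `j`.
-/

open Finset Filter Topology

theorem hasSum_ite_le_sub_iff {M : Type*} [AddCommMonoid M] [TopologicalSpace M] {f : ℕ → M}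
    {a : M} (j : ℕ) : HasSum (fun n => if j ≤ n then f (n - j) else 0) a ↔ HasSum f a := by
  have hshift : ((fun n => if j ≤ n then f (n - j) else 0) ∘ (· + j)) = f := by
    ext n
    simp
  rw [← (add_left_injective j).hasSum_iff, hshift]
  rintro n hn
  simp only [Set.mem_range, not_exists] at hn
  rw [if_neg fun h => hn (n - j) (Nat.sub_add_cancel h)]

theorem sum_range_succ_eq_sum_range_ite {M : Type*} [AddCommMonoid M] {g : ℕ → M} {k : ℕ}
    (hg : ∀ j, k < j → g j = 0) (n : ℕ) :
    ∑ j ∈ range (n + 1), g j = ∑ j ∈ range (k + 1), if j ≤ n then g j else 0 := by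
  rw [← sum_filter]
  refine (sum_subset (fun j hj => ?_) fun j hj hj' => hg j ?_).symm
  · simp only [mem_filter, mem_range] at hj ⊢
    omega
  · simp only [mem_filter, mem_range, not_and, not_le] at hj hj'
    omega

section Rearrangement

variable {R : Type*} [NormedRing R] {a : ℕ → R} {b : ℕ → ℕ → R} {k : ℕ}

theorem sum_range_mul_sub_eq_sum_range_ite (ha : ∀ j, k < j → a j = 0) (n : ℕ) :
    ∑ j ∈ range (n + 1), a j * b j (n - j) =
      ∑ j ∈ range (k + 1), if j ≤ n then a j * b j (n - j) else 0 :=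
  sum_range_succ_eq_sum_range_ite (g := fun j => a j * b j (n - j))
    (fun j hj => by rw [ha j hj, zero_mul]) n

theorem summable_norm_sum_range_mul_sub (ha : ∀ j, k < j → a j = 0)
    (hb : ∀ j, Summable fun m => ‖b j m‖) :
    Summable fun n => ‖∑ j ∈ range (n + 1), a j * b j (n - j)‖ := by
  have hterm (j : ℕ) : Summable fun n => if j ≤ n then ‖a j * b j (n - j)‖ else 0 := by
    have hab : Summable fun m => ‖a j * b j m‖ :=
      ((hb j).mul_left ‖a j‖).of_nonneg_of_le (fun _ => norm_nonneg _) fun _ => norm_mul_le _ _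
    exact ((hasSum_ite_le_sub_iff j).2 hab.hasSum).summable
  refine (summable_sum fun j (_ : j ∈ range (k + 1)) => hterm j).of_nonneg_of_le
    (fun _ => norm_nonneg _) fun n => ?_
  rw [sum_range_mul_sub_eq_sum_range_ite ha]
  refine (norm_sum_le _ _).trans (le_of_eq (sum_congr rfl fun j _ => ?_))
  split_ifs <;> simp

theorem hasSum_sum_range_mul_sub [CompleteSpace R] (ha : ∀ j, k < j → a j = 0)
    (hb : ∀ j, Summable fun m => ‖b j m‖) :
    HasSum (fun n => ∑ j ∈ range (n + 1), a j * b j (n - j))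
      (∑ j ∈ range (k + 1), a j * ∑' m, b j m) := by
  simp only [sum_range_mul_sub_eq_sum_range_ite ha]
  exact hasSum_sum fun j _ =>
    (hasSum_ite_le_sub_iff (f := fun m => a j * b j m) j).2 ((hb j).of_norm.hasSum.mul_left (a j))

end Rearrangement

section QSeries

variable {q : ℂ}

theorem qPoch_zero (a : ℂ) : qPoch q a 0 = 1 :=
  prod_range_zero _

theorem qPoch_succ (a : ℂ) (n : ℕ) : qPoch q a (n + 1) = qPoch q a n * (1 - a * q ^ n) :=
  prod_range_succ _ _

theorem qPoch_add (a : ℂ) (m n : ℕ) :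
    qPoch q a (m + n) = qPoch q a m * qPoch q (a * q ^ m) n := by
  simp only [qPoch, prod_range_add, mul_assoc, pow_add]

theorem qPoch_ne_zero {a : ℂ} (ha : ∀ j : ℕ, a * q ^ j ≠ 1) (n : ℕ) : qPoch q a n ≠ 0 :=
  prod_ne_zero_iff.2 fun j _ => sub_ne_zero.2 (ha j).symm

theorem qPoch_eq_zero {a : ℂ} {i n : ℕ} (hi : i < n) (ha : a * q ^ i = 1) : qPoch q a n = 0 :=
  prod_eq_zero (mem_range.2 hi) (sub_eq_zero.2 ha.symm)

theorem mul_pow_ne_one (hq : ‖q‖ < 1) {a : ℂ} (ha : ‖a‖ < 1) (j : ℕ) : a * q ^ j ≠ 1 := by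
  refine ne_of_apply_ne norm (ne_of_lt ?_)
  calc ‖a * q ^ j‖ = ‖a‖ * ‖q‖ ^ j := by rw [norm_mul, norm_pow]
    _ ≤ ‖a‖ := mul_le_of_le_one_right (norm_nonneg a) (pow_le_one₀ (norm_nonneg q) hq.le)
    _ < ‖(1 : ℂ)‖ := by rwa [norm_one]

theorem mul_pow_ne_one_shift {a : ℂ} (ha : ∀ j : ℕ, a * q ^ j ≠ 1) (m j : ℕ) :
    a * q ^ m * q ^ j ≠ 1 := by
  rw [mul_assoc, ← pow_add]
  exact ha (m + j)

theorem qPoch_self_ne_zero (hq : ‖q‖ < 1) (n : ℕ) : qPoch q q n ≠ 0 :=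
  qPoch_ne_zero (mul_pow_ne_one hq hq) n

theorem summable_norm_mul_pow (hq : ‖q‖ < 1) (a : ℂ) : Summable fun j : ℕ => ‖a * q ^ j‖ := by
  simpa only [norm_mul, norm_pow] using
    (summable_geometric_of_lt_one (norm_nonneg q) hq).mul_left ‖a‖

theorem multipliable_one_sub_mul_pow (hq : ‖q‖ < 1) (a : ℂ) :
    Multipliable fun j : ℕ => 1 - a * q ^ j := by
  simpa only [sub_eq_add_neg] using
    multipliable_one_add_of_summable (f := fun j => -(a * q ^ j))
      (by simpa only [norm_neg] using summable_norm_mul_pow hq a)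

theorem tendsto_qPoch_qPochInf (hq : ‖q‖ < 1) (a : ℂ) :
    Tendsto (qPoch q a) atTop (𝓝 (qPochInf q a)) :=
  (multipliable_one_sub_mul_pow hq a).hasProd.tendsto_prod_nat

theorem qPochInf_ne_zero (hq : ‖q‖ < 1) {a : ℂ} (ha : ∀ j : ℕ, a * q ^ j ≠ 1) :
    qPochInf q a ≠ 0 := by
  simpa only [qPochInf, sub_eq_add_neg] using
    tprod_one_add_ne_zero_of_summable (f := fun j => -(a * q ^ j))
      (fun j => by simpa only [← sub_eq_add_neg] using sub_ne_zero.2 (ha j).symm)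
      (by simpa only [norm_neg] using summable_norm_mul_pow hq a)

theorem qPoch_mul_qPochInf (hq : ‖q‖ < 1) (a : ℂ) (n : ℕ) :
    qPoch q a n * qPochInf q (a * q ^ n) = qPochInf q a := by
  have hshift : (fun j => 1 - a * q ^ (j + n)) = fun j => 1 - a * q ^ n * q ^ j := by
    ext j
    ring
  have h := Multipliable.prod_mul_tprod_nat_mul' (f := fun j => 1 - a * q ^ j) (k := n)
    (by rw [hshift]; exact multipliable_one_sub_mul_pow hq (a * q ^ n))
  rwa [hshift] at h

theorem cauchyP_succ (x y : ℂ) (n : ℕ) :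
    cauchyP q x y (n + 1) = cauchyP q x y n * (x - q ^ n * y) :=
  prod_range_succ _ _

theorem cauchyP_eq_pow_mul_qPoch {x : ℂ} (hx : x ≠ 0) (y : ℂ) (n : ℕ) :
    cauchyP q x y n = x ^ n * qPoch q (y / x) n := by
  rw [cauchyP, qPoch, ← card_range n, ← prod_const, card_range, ← prod_mul_distrib]
  refine prod_congr rfl fun j _ => ?_
  field_simp

theorem qBinom_zero_right (hq : ‖q‖ < 1) (n : ℕ) : qBinom q n 0 = 1 := by
  rw [qBinom, qPoch_zero, Nat.sub_zero, one_mul, div_self (qPoch_self_ne_zero hq n)]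

theorem qBinom_self (hq : ‖q‖ < 1) (n : ℕ) : qBinom q n n = 1 := by
  rw [qBinom, Nat.sub_self, qPoch_zero, mul_one, div_self (qPoch_self_ne_zero hq n)]

theorem qBinom_succ_succ (hq : ‖q‖ < 1) {n j : ℕ} (h : j < n) :
    qBinom q (n + 1) (j + 1) = q ^ (j + 1) * qBinom q n (j + 1) + qBinom q n j := by
  obtain ⟨m, rfl⟩ : ∃ m, n = j + 1 + m := ⟨n - (j + 1), by omega⟩
  have hm : j + 1 + m - j = m + 1 := by omega
  simp only [qBinom, Nat.add_sub_add_right, Nat.add_sub_cancel_left, hm, qPoch_succ]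
  have hpoch := qPoch_self_ne_zero hq
  have hfac : ∀ i, (1 : ℂ) - q * q ^ i ≠ 0 := fun i => sub_ne_zero.2 (mul_pow_ne_one hq hq i).symm
  field_simp [hpoch j, hpoch m, hfac j, hfac m]
  ring

theorem Dq_iterate_succ_apply (f : ℂ → ℂ) (n : ℕ) (w : ℂ) :
    (Dq q)^[n + 1] f w = ((Dq q)^[n] f w - (Dq q)^[n] f (q * w)) / w := by
  rw [Function.iterate_succ_apply']
  rfl

theorem Dq_iterate_sub {w : ℂ} (hw : w ≠ 0) (f : ℂ → ℂ) (n : ℕ) :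
    (Dq q)^[n] f w - (Dq q)^[n] f (q * w) = w * (Dq q)^[n + 1] f w := by
  rw [Dq_iterate_succ_apply, mul_div_cancel₀ _ hw]

def qDerivPowCoeff (q : ℂ) (k j : ℕ) : ℂ :=
  (-1) ^ j * q ^ ((k * j : ℤ) - (j.choose 2 : ℤ)) * qPoch q (q ^ (-(k : ℤ))) j

theorem qDerivPowCoeff_eq_zero (hq0 : q ≠ 0) {k j : ℕ} (h : k < j) : qDerivPowCoeff q k j = 0 := by
  rw [qDerivPowCoeff, qPoch_eq_zero h (by simp [hq0]), mul_zero]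

theorem qDerivPowCoeff_succ (hq0 : q ≠ 0) {k j : ℕ} (h : j < k) :
    qDerivPowCoeff q k (j + 1) = qDerivPowCoeff q k j * (1 - q ^ (k - j)) := by
  have hexp : ((k * (j + 1 : ℕ) : ℤ) - ((j + 1).choose 2 : ℕ)) =
      ((k * j : ℤ) - (j.choose 2 : ℤ)) + ((k - j : ℕ) : ℤ) := by
    rw [Nat.choose_succ_succ', Nat.choose_one_right]
    push_cast [h.le]
    ring
  have hunit : q ^ (-(k : ℤ)) * q ^ j * q ^ (k - j) = 1 := by
    rw [← zpow_natCast, ← zpow_natCast, ← zpow_add₀ hq0, ← zpow_add₀ hq0]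
    simp [h.le]
  rw [qDerivPowCoeff, qDerivPowCoeff, qPoch_succ, hexp, zpow_add₀ hq0, zpow_natCast]
  linear_combination (-1) ^ j * q ^ ((k * j : ℤ) - (j.choose 2 : ℤ)) *
    qPoch q (q ^ (-(k : ℤ))) j * hunit

-- For `j > k` the truncated exponent `k - j` is harmless: the coefficient vanishes.
theorem Dq_iterate_pow (hq0 : q ≠ 0) (k j : ℕ) {w : ℂ} (hw : w ≠ 0) :
    (Dq q)^[j] (· ^ k) w = qDerivPowCoeff q k j * w ^ (k - j) := by
  induction j generalizing w with
  | zero => simp [qDerivPowCoeff, qPoch_zero]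
  | succ j ih =>
    rw [Dq_iterate_succ_apply, ih hw, ih (mul_ne_zero hq0 hw), mul_pow]
    rcases lt_or_ge j k with h | h
    · rw [qDerivPowCoeff_succ hq0 h, show k - j = k - (j + 1) + 1 by omega]
      field_simp
      ring
    · rw [qDerivPowCoeff_eq_zero hq0 (Nat.lt_succ_of_le h), show k - j = 0 by omega]
      simp

theorem sum_qBinom_pascal (hq : ‖q‖ < 1) (n : ℕ) (A : ℕ → ℂ) :
    ∑ j ∈ range (n + 1), qBinom q n j * (q ^ j * A j + A (j + 1)) =
      ∑ j ∈ range (n + 2), qBinom q (n + 1) j * A j := by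
  have hinner : ∀ j ∈ range n, qBinom q (n + 1) (j + 1) * A (j + 1) =
      qBinom q n (j + 1) * (q ^ (j + 1) * A (j + 1)) + qBinom q n j * A (j + 1) := by
    intro j hj
    rw [qBinom_succ_succ hq (mem_range.1 hj)]
    ring
  simp only [mul_add, sum_add_distrib]
  rw [sum_range_succ' _ n, sum_range_succ (fun j => qBinom q n j * A (j + 1)),
    sum_range_succ _ (n + 1), sum_range_succ' _ n, sum_congr rfl hinner, sum_add_distrib,
    qBinom_zero_right hq, qBinom_zero_right hq, qBinom_self hq, qBinom_self hq]
  ring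

theorem Dq_iterate_mul (hq0 : q ≠ 0) (hq : ‖q‖ < 1) (f g : ℂ → ℂ) (n : ℕ) {w : ℂ}
    (hw : w ≠ 0) :
    (Dq q)^[n] (fun z => f z * g z) w =
      ∑ j ∈ range (n + 1), qBinom q n j * ((Dq q)^[j] f w * (Dq q)^[n - j] g (q ^ j * w)) := by
  induction n generalizing w with
  | zero => simp [qBinom_zero_right hq]
  | succ n ih =>
    set A : ℕ → ℂ := fun j => (Dq q)^[j] f w * (Dq q)^[n + 1 - j] g (q ^ j * w)
    have hterm : ∀ j ∈ range (n + 1),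
        (Dq q)^[j] f w * (Dq q)^[n - j] g (q ^ j * w) -
          (Dq q)^[j] f (q * w) * (Dq q)^[n - j] g (q ^ j * (q * w)) =
        w * (q ^ j * A j + A (j + 1)) := by
      intro j hj
      have hjw : q ^ j * w ≠ 0 := mul_ne_zero (pow_ne_zero j hq0) hw
      have hg := Dq_iterate_sub (q := q) hjw g (n - j)
      have hf := Dq_iterate_sub (q := q) hw f j
      simp only [A, show n + 1 - j = n - j + 1 by have := mem_range.1 hj; omega,
        Nat.add_sub_add_right, show q ^ (j + 1) * w = q * (q ^ j * w) by ring,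
        show q ^ j * (q * w) = q * (q ^ j * w) by ring]
      linear_combination (Dq q)^[j] f w * hg + (Dq q)^[n - j] g (q * (q ^ j * w)) * hf
    rw [Dq_iterate_succ_apply, ih hw, ih (mul_ne_zero hq0 hw), ← sum_sub_distrib,
      ← sum_qBinom_pascal hq n A, sum_div]
    refine sum_congr rfl fun j hj => ?_
    rw [← mul_sub, hterm j hj]
    field_simp

theorem qPochInf_eq_one_sub_mul (hq : ‖q‖ < 1) (a : ℂ) :
    qPochInf q a = (1 - a) * qPochInf q (a * q) := by
  simpa [qPoch] using (qPoch_mul_qPochInf hq a 1).symm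

theorem Dq_iterate_qPochInf_div (hq0 : q ≠ 0) (hq : ‖q‖ < 1) (x y : ℂ) (n : ℕ) {w : ℂ}
    (hw : w ≠ 0) (hxw : qPochInf q (x * w) ≠ 0) :
    (Dq q)^[n] (fun z => qPochInf q (y * z) / qPochInf q (x * z)) w =
      cauchyP q x y n * qPochInf q (y * q ^ n * w) / qPochInf q (x * w) := by
  induction n generalizing w with
  | zero => simp [cauchyP]
  | succ n ih =>
    have hx : qPochInf q (x * w) = (1 - x * w) * qPochInf q (x * (q * w)) := by
      rw [qPochInf_eq_one_sub_mul hq, show x * w * q = x * (q * w) by ring]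
    have hy : qPochInf q (y * q ^ n * w) =
        (1 - y * q ^ n * w) * qPochInf q (y * q ^ (n + 1) * w) := by
      rw [qPochInf_eq_one_sub_mul hq, pow_succ]
      ring_nf
    have hx₁ : 1 - w * x ≠ 0 := by rw [mul_comm]; exact left_ne_zero_of_mul (hx ▸ hxw)
    have hx₂ : qPochInf q (x * (q * w)) ≠ 0 := right_ne_zero_of_mul (hx ▸ hxw)
    rw [Dq_iterate_succ_apply, ih hw hxw, ih (mul_ne_zero hq0 hw) hx₂, hx, hy, cauchyP_succ,
      show y * q ^ n * (q * w) = y * q ^ (n + 1) * w by ring]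
    field_simp
    ring

def phi21Term (q a b c z : ℂ) (n : ℕ) : ℂ :=
  qPoch q a n * qPoch q b n / (qPoch q c n * qPoch q q n) * z ^ n

theorem Phi21_eq_tsum (q a b c z : ℂ) : Phi21 q a b c z = ∑' n, phi21Term q a b c z n :=
  rfl

theorem summable_norm_phi21Term (hq : ‖q‖ < 1) (a b : ℂ) {c : ℂ} (hc : ∀ j : ℕ, c * q ^ j ≠ 1)
    {z : ℂ} (hz : ‖z‖ < 1) : Summable fun n => ‖phi21Term q a b c z n‖ := by
  have hcoeff : Tendsto (fun n => qPoch q a n * qPoch q b n / (qPoch q c n * qPoch q q n)) atTop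
      (𝓝 (qPochInf q a * qPochInf q b / (qPochInf q c * qPochInf q q))) :=
    ((tendsto_qPoch_qPochInf hq a).mul (tendsto_qPoch_qPochInf hq b)).div
      ((tendsto_qPoch_qPochInf hq c).mul (tendsto_qPoch_qPochInf hq q))
      (mul_ne_zero (qPochInf_ne_zero hq hc) (qPochInf_ne_zero hq (mul_pow_ne_one hq hq)))
  refine summable_of_isBigO_nat (summable_geometric_of_lt_one (norm_nonneg z) hz) ?_
  simpa [phi21Term] using
    ((hcoeff.isBigO_one ℝ).mul (Asymptotics.isBigO_refl (fun n => z ^ n) atTop).norm_right).norm_left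

section Expansion

variable {t x y ω : ℂ} {k : ℕ}

theorem leibniz_term_eq_mul_phi21Term (hq0 : q ≠ 0) (hq : ‖q‖ < 1) (hω : ω ≠ 0) (hx : x ≠ 0)
    (hxω : ‖x * ω‖ < 1) (hyω : ∀ m : ℕ, y * ω * q ^ m ≠ 1) (j m : ℕ) :
    t ^ (j + m) / qPoch q q (j + m) * (qBinom q (j + m) j *
      ((Dq q)^[j] (· ^ k) ω *
        (Dq q)^[m] (fun z => qPochInf q (y * z) / qPochInf q (x * z)) (q ^ j * ω))) =
    qPochInf q (y * ω) / qPochInf q (x * ω) * ω ^ k *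
        (qDerivPowCoeff q k j * qPoch q (x * ω) j / (qPoch q (y * ω) j * qPoch q q j) *
          (t / ω) ^ j) *
      phi21Term q (y / x) 0 (y * ω * q ^ j) (x * t) m := by
  have hX : qPoch q (x * ω) j * qPochInf q (x * (q ^ j * ω)) = qPochInf q (x * ω) := by
    rw [← qPoch_mul_qPochInf hq (x * ω) j]
    ring_nf
  have hY : qPoch q (y * ω) j * qPoch q (y * ω * q ^ j) m * qPochInf q (y * q ^ m * (q ^ j * ω)) =
      qPochInf q (y * ω) := by
    rw [← qPoch_mul_qPochInf hq (y * ω) (j + m), qPoch_add, pow_add]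
    ring_nf
  have hX₀ : qPochInf q (x * ω) ≠ 0 := qPochInf_ne_zero hq (mul_pow_ne_one hq hxω)
  have hXj : qPochInf q (x * (q ^ j * ω)) ≠ 0 := right_ne_zero_of_mul (hX ▸ hX₀)
  have hxj : qPoch q (x * ω) j ≠ 0 := left_ne_zero_of_mul (hX ▸ hX₀)
  have hyj : qPoch q (y * ω) j ≠ 0 := qPoch_ne_zero hyω j
  have hyjm : qPoch q (y * ω * q ^ j) m ≠ 0 := qPoch_ne_zero (mul_pow_ne_one_shift hyω j) m
  have hqq := qPoch_self_ne_zero hq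
  rw [Dq_iterate_pow hq0 k j hω,
    Dq_iterate_qPochInf_div hq0 hq x y m (mul_ne_zero (pow_ne_zero j hq0) hω) hXj,
    cauchyP_eq_pow_mul_qPoch hx, qBinom, Nat.add_sub_cancel_left, phi21Term,
    show qPoch q 0 m = 1 from prod_eq_one fun _ _ => by simp, ← hX, ← hY]
  rcases le_or_gt j k with hjk | hjk
  · obtain ⟨l, rfl⟩ := Nat.exists_eq_add_of_le hjk
    rw [Nat.add_sub_cancel_left]
    generalize qPochInf q (x * (q ^ j * ω)) = X at hXj ⊢
    generalize qPoch q (y * ω * q ^ j) m = Y at hyjm ⊢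
    rw [div_pow]
    field_simp [hqq j, hqq m, hqq (j + m)]
    ring
  · simp [qDerivPowCoeff_eq_zero hq0 hjk]

theorem div_qPoch_mul_Dq_iterate_eq_sum (hq0 : q ≠ 0) (hq : ‖q‖ < 1) (hω : ω ≠ 0) (hx : x ≠ 0)
    (hxω : ‖x * ω‖ < 1) (hyω : ∀ m : ℕ, y * ω * q ^ m ≠ 1) (n : ℕ) :
    t ^ n / qPoch q q n *
        (Dq q)^[n] (fun w => qPochInf q (y * w) / qPochInf q (x * w) * w ^ k) ω =
      ∑ j ∈ range (n + 1), qPochInf q (y * ω) / qPochInf q (x * ω) * ω ^ k *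
        (qDerivPowCoeff q k j * qPoch q (x * ω) j / (qPoch q (y * ω) j * qPoch q q j) *
          (t / ω) ^ j) *
        phi21Term q (y / x) 0 (y * ω * q ^ j) (x * t) (n - j) := by
  have hcomm : (fun w => qPochInf q (y * w) / qPochInf q (x * w) * w ^ k) =
      fun w => w ^ k * (qPochInf q (y * w) / qPochInf q (x * w)) :=
    funext fun _ => mul_comm _ _
  rw [hcomm, Dq_iterate_mul hq0 hq (· ^ k) _ n hω, mul_sum]
  refine sum_congr rfl fun j hj => ?_
  obtain ⟨m, rfl⟩ := Nat.exists_eq_add_of_le (mem_range_succ_iff.1 hj)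
  rw [Nat.add_sub_cancel_left]
  exact leibniz_term_eq_mul_phi21Term hq0 hq hω hx hxω hyω j m

end Expansion

end QSeries

/-- Lemma 4.2, action of `T(tD_ω)` on `((yω;q)_∞/(xω;q)_∞)·ω^k`. -/
theorem stmt5 (q : ℂ) (hq0 : q ≠ 0) (hq1 : ‖q‖ < 1) (k : ℕ) (t x y ω : ℂ)
    (hω : ω ≠ 0) (hx : x ≠ 0) (hxω : ‖x * ω‖ < 1) (hxt : ‖x * t‖ < 1)
    (hyω : ∀ m : ℕ, y * ω * q ^ m ≠ 1) :
    Summable (fun n : ℕ => ‖t ^ n / qPoch q q n *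
        ((Dq q)^[n] (fun w => qPochInf q (y * w) / qPochInf q (x * w) * w ^ k)) ω‖) ∧
    ∑' n : ℕ, t ^ n / qPoch q q n *
        ((Dq q)^[n] (fun w => qPochInf q (y * w) / qPochInf q (x * w) * w ^ k)) ω =
      qPochInf q (y * ω) / qPochInf q (x * ω) * ω ^ k *
        ∑ j ∈ Finset.range (k + 1),
          (-1) ^ j * q ^ ((k * j : ℤ) - (j.choose 2 : ℤ)) *
            (qPoch q (q ^ (-(k : ℤ))) j * qPoch q (x * ω) j /
              (qPoch q (y * ω) j * qPoch q q j)) * (t / ω) ^ j *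
            Phi21 q (y / x) 0 (y * ω * q ^ j) (x * t) := by
  have ha (j : ℕ) (hj : k < j) : qPochInf q (y * ω) / qPochInf q (x * ω) * ω ^ k *
      (qDerivPowCoeff q k j * qPoch q (x * ω) j / (qPoch q (y * ω) j * qPoch q q j) *
        (t / ω) ^ j) = 0 := by
    rw [qDerivPowCoeff_eq_zero hq0 hj]
    ring
  have hb (j : ℕ) : Summable fun m => ‖phi21Term q (y / x) 0 (y * ω * q ^ j) (x * t) m‖ :=
    summable_norm_phi21Term hq1 (y / x) 0 (mul_pow_ne_one_shift hyω j) hxt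
  simp only [div_qPoch_mul_Dq_iterate_eq_sum hq0 hq1 hω hx hxω hyω]
  refine ⟨summable_norm_sum_range_mul_sub ha hb, ?_⟩
  rw [(hasSum_sum_range_mul_sub ha hb).tsum_eq, mul_sum]
  refine sum_congr rfl fun j _ => ?_
  rw [qDerivPowCoeff, ← Phi21_eq_tsum]
  ring

end
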